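/- arXiv:2103.07598 — 2 statements merged into one kernel-verified Lean document; each statement's English description precedes it below -/
import Mathlib

section
/- For every image x with N patches and every permutation σ of Fin N, W(x, x ∘ σ) = 0; in particular, if x ∘ σ ≠ x (e.g., an image [x₁, x₂] of two distinct patches with its swapped version [x₂, x₁]) then W(x, x ∘ σ) = 0 while the image ℓ1 distance d₁(x, x ∘ σ) > 0, so IWD can vanish on distinct images where every ℓp distance is positive. -/
open Finset

/-- The ℓ1 norm of a patch `u : Fin k → ℝ`. -/
noncomputable def patchL1 {k : ℕ} (u : Fin k → ℝ) : ℝ := ∑ j, |u j|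

/-- The internal Wasserstein distance between two images with `N` patches:
`W(x, y) = (1/N) · min over permutations σ of Fin N of Σ_i ‖x i − y (σ i)‖₁`. -/
noncomputable def IWD {N k : ℕ} (x y : Fin N → Fin k → ℝ) : ℝ :=
  (1 / (N : ℝ)) *
    Finset.univ.inf' Finset.univ_nonempty
      (fun σ : Equiv.Perm (Fin N) => ∑ i, patchL1 (x i - y (σ i)))

/-- The image ℓ1 distance `d₁(x, y) = Σ_i ‖x i − y i‖₁`. -/
noncomputable def imgL1 {N k : ℕ} (x y : Fin N → Fin k → ℝ) : ℝ :=
  ∑ i, patchL1 (x i - y i)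

section

variable {N k : ℕ}

lemma patchL1_nonneg (u : Fin k → ℝ) : 0 ≤ patchL1 u :=
  sum_nonneg fun j _ => abs_nonneg (u j)

lemma patchL1_eq_zero_iff {u : Fin k → ℝ} : patchL1 u = 0 ↔ u = 0 := by
  rw [patchL1, sum_eq_zero_iff_of_nonneg fun j _ => abs_nonneg (u j), funext_iff]
  simp only [mem_univ, true_implies, abs_eq_zero, Pi.zero_apply]

lemma patchL1_pos_iff {u : Fin k → ℝ} : 0 < patchL1 u ↔ u ≠ 0 := by
  rw [(patchL1_nonneg u).lt_iff_ne', Ne, Ne, patchL1_eq_zero_iff]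

lemma imgL1_pos_of_ne {x y : Fin N → Fin k → ℝ} (h : x ≠ y) : 0 < imgL1 x y := by
  obtain ⟨i, hi⟩ := Function.ne_iff.mp h
  exact sum_pos' (fun i _ => patchL1_nonneg _)
    ⟨i, mem_univ i, patchL1_pos_iff.mpr (sub_ne_zero.mpr hi)⟩

lemma IWD_nonneg (x y : Fin N → Fin k → ℝ) : 0 ≤ IWD x y :=
  mul_nonneg (by positivity)
    (le_inf' _ _ fun _ _ => sum_nonneg fun _ _ => patchL1_nonneg _)

lemma IWD_le (x y : Fin N → Fin k → ℝ) (τ : Equiv.Perm (Fin N)) :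
    IWD x y ≤ (1 / (N : ℝ)) * ∑ i, patchL1 (x i - y (τ i)) :=
  mul_le_mul_of_nonneg_left
    (inf'_le (fun σ : Equiv.Perm (Fin N) => ∑ i, patchL1 (x i - y (σ i))) (mem_univ τ))
    (by positivity)

lemma IWD_comp_perm_self (x : Fin N → Fin k → ℝ) (σ : Equiv.Perm (Fin N)) :
    IWD x (x ∘ σ) = 0 := by
  refine le_antisymm ?_ (IWD_nonneg x (x ∘ σ))
  simpa [patchL1] using IWD_le x (x ∘ σ) σ⁻¹

end

theorem iwd_zero_on_patch_permutation_general (N k : ℕ)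
    (x : Fin N → Fin k → ℝ) (σ : Equiv.Perm (Fin N)) :
    IWD x (x ∘ σ) = 0 ∧ (x ∘ σ ≠ x → 0 < imgL1 x (x ∘ σ)) :=
  ⟨IWD_comp_perm_self x σ, fun h => imgL1_pos_of_ne h.symm⟩

/-- IWD vanishes between an image and any patch permutation of itself,
while the image ℓ1 distance is positive whenever the permuted image differs. -/
theorem iwd_zero_on_patch_permutation (N k : ℕ) (hN : 1 ≤ N) (hk : 1 ≤ k)
    (x : Fin N → Fin k → ℝ) (σ : Equiv.Perm (Fin N)) :
    IWD x (x ∘ σ) = 0 ∧ (x ∘ σ ≠ x → 0 < imgL1 x (x ∘ σ)) :=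
  iwd_zero_on_patch_permutation_general N k x σ
end

section
/- Theorem 1 (ℓ1 case): for every image x with N ≥ 1 patches and every perturbation budget ε > 0, there exists ε' ≤ ε (namely ε' = ε/N) such that diam(B₁(x, ε)) ≤ diam(B_W(x, ε')), i.e., the diameter of the ℓ1 perturbation ball is at most the diameter of the IWD perturbation ball of a no-larger radius. -/
open Finset

/-- The IWD ball of radius ε around x. -/
def iwdBall {N k : ℕ} (x : Fin N → Fin k → ℝ) (ε : ℝ) : Set (Fin N → Fin k → ℝ) :=
  {y | IWD x y ≤ ε}

/-- The image ℓ1 ball of radius ε around x. -/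
def l1Ball {N k : ℕ} (x : Fin N → Fin k → ℝ) (ε : ℝ) : Set (Fin N → Fin k → ℝ) :=
  {y | imgL1 x y ≤ ε}

/-- The diameter of a set of images with respect to the image ℓ1 distance
(with the real-number convention sSup ∅ = 0). -/
noncomputable def imgDiam {N k : ℕ} (A : Set (Fin N → Fin k → ℝ)) : ℝ :=
  sSup {r : ℝ | ∃ y ∈ A, ∃ z ∈ A, r = imgL1 y z}

/-! The identity permutation gives `W(x, y) ≤ d₁(x, y) / N`, so the ℓ1 ball of radius `ε` lies
inside the IWD ball of radius `ε / N`. Diameters are monotone as soon as the larger set is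
bounded, and an IWD ball is: matching patches along an optimal permutation shows that every `y`
in it has total patch mass at most `∑ i, ‖x i‖₁ + N ε'`. -/

@[simp]
lemma patchL1_zero {k : ℕ} : patchL1 (0 : Fin k → ℝ) = 0 := by
  simp [patchL1]

lemma patchL1_sub_le {k : ℕ} (u v : Fin k → ℝ) :
    patchL1 (u - v) ≤ patchL1 u + patchL1 v := by
  rw [patchL1, patchL1, patchL1, ← Finset.sum_add_distrib]
  exact Finset.sum_le_sum fun j _ => abs_sub (u j) (v j)

lemma patchL1_le_add_patchL1_sub {k : ℕ} (u v : Fin k → ℝ) :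
    patchL1 v ≤ patchL1 u + patchL1 (u - v) := by
  simpa using patchL1_sub_le u (u - v)

@[simp]
lemma imgL1_self {N k : ℕ} (x : Fin N → Fin k → ℝ) : imgL1 x x = 0 := by
  simp [imgL1]

lemma imgL1_le_add {N k : ℕ} (y z : Fin N → Fin k → ℝ) :
    imgL1 y z ≤ ∑ i, patchL1 (y i) + ∑ i, patchL1 (z i) := by
  rw [imgL1, ← Finset.sum_add_distrib]
  exact Finset.sum_le_sum fun i _ => patchL1_sub_le (y i) (z i)

lemma IWD_le_imgL1_div {N k : ℕ} (x y : Fin N → Fin k → ℝ) :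
    IWD x y ≤ imgL1 x y / N := by
  rw [IWD, one_div_mul_eq_div]
  gcongr
  exact Finset.inf'_le _ (Finset.mem_univ (Equiv.refl (Fin N)))

lemma l1Ball_subset_iwdBall {N k : ℕ} (x : Fin N → Fin k → ℝ) (ε : ℝ) :
    l1Ball x ε ⊆ iwdBall x (ε / N) := fun y hy =>
  (IWD_le_imgL1_div x y).trans (div_le_div_of_nonneg_right hy N.cast_nonneg)

lemma exists_perm_IWD_eq {N k : ℕ} (x y : Fin N → Fin k → ℝ) :
    ∃ σ : Equiv.Perm (Fin N), IWD x y = (∑ i, patchL1 (x i - y (σ i))) / N := by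
  obtain ⟨σ, -, hσ⟩ := Finset.exists_mem_eq_inf' Finset.univ_nonempty
    (fun σ : Equiv.Perm (Fin N) => ∑ i, patchL1 (x i - y (σ i)))
  exact ⟨σ, by rw [IWD, hσ, one_div_mul_eq_div]⟩

lemma sum_patchL1_le_of_IWD_le {N k : ℕ} (hN : 1 ≤ N) {x y : Fin N → Fin k → ℝ} {ε : ℝ}
    (hy : IWD x y ≤ ε) :
    ∑ i, patchL1 (y i) ≤ ∑ i, patchL1 (x i) + N * ε := by
  obtain ⟨σ, hσ⟩ := exists_perm_IWD_eq x y
  have hcost : ∑ i, patchL1 (x i - y (σ i)) ≤ N * ε := by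
    rw [hσ, div_le_iff₀ (by exact_mod_cast hN)] at hy
    linarith
  calc ∑ i, patchL1 (y i) = ∑ i, patchL1 (y (σ i)) := (Equiv.sum_comp σ _).symm
    _ ≤ ∑ i, (patchL1 (x i) + patchL1 (x i - y (σ i))) :=
        Finset.sum_le_sum fun i _ => patchL1_le_add_patchL1_sub _ _
    _ ≤ ∑ i, patchL1 (x i) + N * ε := by rw [Finset.sum_add_distrib]; gcongr

def imgDists {N k : ℕ} (A : Set (Fin N → Fin k → ℝ)) : Set ℝ :=
  {r : ℝ | ∃ y ∈ A, ∃ z ∈ A, r = imgL1 y z}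

lemma imgDiam_mono {N k : ℕ} {A B : Set (Fin N → Fin k → ℝ)} (hAB : A ⊆ B)
    (hA : A.Nonempty) (hB : BddAbove (imgDists B)) : imgDiam A ≤ imgDiam B := by
  obtain ⟨x, hx⟩ := hA
  refine csSup_le_csSup hB ⟨imgL1 x x, x, hx, x, hx, rfl⟩ ?_
  rintro r ⟨y, hy, z, hz, rfl⟩
  exact ⟨y, hAB hy, z, hAB hz, rfl⟩

lemma bddAbove_imgDists_iwdBall {N k : ℕ} (hN : 1 ≤ N) (x : Fin N → Fin k → ℝ) (ε : ℝ) :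
    BddAbove (imgDists (iwdBall x ε)) := by
  refine ⟨2 * (∑ i, patchL1 (x i) + N * ε), ?_⟩
  rintro r ⟨y, hy, z, hz, rfl⟩
  have hy' := sum_patchL1_le_of_IWD_le hN hy
  have hz' := sum_patchL1_le_of_IWD_le hN hz
  linarith [imgL1_le_add y z]

theorem diam_l1Ball_le_diam_iwdBall_general (N k : ℕ) (hN : 1 ≤ N)
    (x : Fin N → Fin k → ℝ) (ε : ℝ) (hε : 0 < ε) :
    ∃ ε' : ℝ, ε' ≤ ε ∧ ε' = ε / (N : ℝ) ∧
      imgDiam (l1Ball x ε) ≤ imgDiam (iwdBall x ε') := by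
  refine ⟨ε / N, div_le_self hε.le (by exact_mod_cast hN), rfl, ?_⟩
  have hx : x ∈ l1Ball x ε := by simpa only [l1Ball, Set.mem_ofPred_eq, imgL1_self] using hε.le
  exact imgDiam_mono (l1Ball_subset_iwdBall x ε) ⟨x, hx⟩
    (bddAbove_imgDists_iwdBall hN x _)

/-- Theorem 1, ℓ1 case: for every perturbation budget ε > 0 there is a
no-larger IWD budget ε/N whose IWD ball has diameter at least that of the ℓ1 ball. -/
theorem diam_l1Ball_le_diam_iwdBall (N k : ℕ) (hN : 1 ≤ N) (hk : 1 ≤ k)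
    (x : Fin N → Fin k → ℝ) (ε : ℝ) (hε : 0 < ε) :
    ∃ ε' : ℝ, ε' ≤ ε ∧ ε' = ε / (N : ℝ) ∧
      imgDiam (l1Ball x ε) ≤ imgDiam (iwdBall x ε') :=
  diam_l1Ball_le_diam_iwdBall_general N k hN x ε hε
end
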